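/- For two vertices x ∈ P_i, y ∈ P_j in different parts of Construction 1 and a part h with e(i,h) ≠ 0 and e(j,h) ≠ 0, the blocks σ_ih(B_i^{e(i,h)}(x)) and σ_jh(B_j^{e(j,h)}(y)) lie in different parallel classes of D_h (since e(h,i) ≠ e(h,j)), hence meet in exactly q^(d−2) points, and x and y have exactly q^d − 2q^(d−1) + q^(d−2) common neighbours in P_h. -/
import Mathlib


/-- For x ∈ P_i, y ∈ P_j in different parts of Construction 1 and a
part h with e(i,h) ≠ 0 ≠ e(j,h), the blocks σ_ih(B_i^{e(i,h)}(x)) = B_h^c(u) and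
σ_jh(B_j^{e(j,h)}(y)) = B_h^{c'}(w) lie in different parallel classes of D_h
(since e(h,i) ≠ e(h,j), i.e. c ≠ c'), hence meet in exactly q^(d−2) points, and
x and y have exactly q^d − 2q^(d−1) + q^(d−2) common neighbours in P_h (the points
of P_h outside both blocks, by inclusion–exclusion). -/
theorem common_neighbours_different_parts
    (q d m κ : ℕ) (hq : 2 ≤ q) (hd : 2 ≤ d)
    {Ph : Type*} [Fintype Ph] [DecidableEq Ph]
    (hPh : Fintype.card Ph = q ^ d)
    -- the affine design D_h of parameters (q, q^(d-2))
    (B : Fin κ → Ph → Finset Ph)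
    (cardB : ∀ c x, (B c x).card = q ^ (d - 1))
    (interB : ∀ c c' x y, c ≠ c' → (B c x ∩ B c' y).card = q ^ (d - 2))
    -- the matrix L: distinct nonzero entries of a row are distinct
    (e : Fin m → Fin m → Option (Fin κ))
    (hrow : ∀ h i j, i ≠ j → e h i ≠ none → e h i ≠ e h j)
    (i j h : Fin m) (hij : i ≠ j)
    (c c' : Fin κ) (hc : e h i = some c) (hc' : e h j = some c')
    (u w : Ph) :
    c ≠ c' ∧
    (B c u ∩ B c' w).card = q ^ (d - 2) ∧
    (Finset.univ \ (B c u ∪ B c' w)).card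
      = q ^ d - 2 * q ^ (d - 1) + q ^ (d - 2) := by
  have hcc : c ≠ c' := by
    intro hcc
    exact hrow h i j hij (by simp [hc]) (by rw [hc, hc', hcc])
  refine ⟨hcc, interB c c' u w hcc, ?_⟩
  have hunion : (B c u ∪ B c' w).card + q ^ (d - 2)
      = q ^ (d - 1) + q ^ (d - 1) := by
    rw [← interB c c' u w hcc, Finset.card_union_add_card_inter, cardB, cardB]
  rw [Finset.card_sdiff_of_subset (Finset.subset_univ _), Finset.card_univ, hPh]
  have h1 : q ^ d = q * q ^ (d - 1) := by
    conv_lhs => rw [show d = (d - 1) + 1 by omega]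
    ring
  have h2 : q ^ (d - 1) = q * q ^ (d - 2) := by
    conv_lhs => rw [show d - 1 = (d - 2) + 1 by omega]
    ring
  have h4 : 2 * q ^ (d - 1) ≤ q * q ^ (d - 1) := Nat.mul_le_mul_right _ hq
  have h3 : 1 ≤ q ^ (d - 2) := Nat.one_le_pow _ _ (by omega)
  omega
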